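/- arXiv:2502.14213 — 5 statements merged into one kernel-verified Lean document; each statement's English description precedes it below -/
import Mathlib

section
/- Let I_1, …, I_l ⊆ {1,…,m} be index sets such that span{v_h : h ∈ I_1 ∪ ⋯ ∪ I_l} = Row(A) (equivalently, the union contains a maximal linearly independent subset S of the rows of A). Then the composition of projections P_{I_l} ∘ ⋯ ∘ P_{I_1}, restricted to Row(A), has operator norm strictly less than 1; that is, for every x ∈ Row(A) with ‖x‖ = 1, one has ‖P_{I_l}(⋯(P_{I_1} x)⋯)‖ < 1. -/
/-!
A product of norm-nonincreasing maps can preserve the norm of `x` only if each factor does,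
at the point it is applied to; an orthogonal projection preserves a norm only on its range,
where it is the identity. So if `‖P_{I_l} ⋯ P_{I_1} x‖ = ‖x‖`, then every `P_{I_t}` fixes `x`,
i.e. `x` is orthogonal to every `v_h` with `h ∈ I_1 ∪ ⋯ ∪ I_l`, hence to `Row(A)`.
As `x ∈ Row(A)`, `x = 0`.
-/

/-- The orthogonal projection of `E` onto the orthogonal complement of
`span {v h : h ∈ I}`, i.e. the projection `I - A_I† A_I` onto the null space of the
row block `A_I` of the matrix `A` whose rows are the vectors `v h`. -/
noncomputable def projPerp {E : Type*} [NormedAddCommGroup E] [InnerProductSpace ℝ E]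
    [FiniteDimensional ℝ E] {m : ℕ} (v : Fin m → E) (I : Set (Fin m)) (x : E) : E :=
  (Submodule.orthogonalProjectionOnto (Submodule.span ℝ (v '' I))ᗮ x : E)

namespace List

variable {α : Type*} [Norm α] {L : List (α → α)}

theorem norm_foldl_apply_le (hL : ∀ f ∈ L, ∀ y, ‖f y‖ ≤ ‖y‖) (x : α) :
    ‖L.foldl (fun y f => f y) x‖ ≤ ‖x‖ := by
  induction L generalizing x with
  | nil => exact le_rfl
  | cons f L ih =>
    rw [foldl_cons]
    exact (ih (fun g hg => hL g (mem_cons_of_mem f hg)) (f x)).trans (hL f mem_cons_self x)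

theorem apply_eq_self_of_norm_foldl_apply_eq (hL : ∀ f ∈ L, ∀ y, ‖f y‖ ≤ ‖y‖)
    (hfix : ∀ f ∈ L, ∀ y, ‖f y‖ = ‖y‖ → f y = y) {x : α}
    (hx : ‖L.foldl (fun y f => f y) x‖ = ‖x‖) : ∀ f ∈ L, f x = x := by
  induction L generalizing x with
  | nil => simp
  | cons f L ih =>
    have hL' : ∀ g ∈ L, ∀ y, ‖g y‖ ≤ ‖y‖ := fun g hg => hL g (mem_cons_of_mem f hg)
    rw [foldl_cons] at hx
    have hfx : f x = x := by
      refine hfix f mem_cons_self x (le_antisymm (hL f mem_cons_self x) ?_)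
      exact hx ▸ norm_foldl_apply_le hL' (f x)
    rw [hfx] at hx
    exact forall_mem_cons.mpr
      ⟨hfx, ih hL' (fun g hg => hfix g (mem_cons_of_mem f hg)) hx⟩

end List

section projPerp

variable {E : Type*} [NormedAddCommGroup E] [InnerProductSpace ℝ E] [FiniteDimensional ℝ E]
  {m : ℕ} (v : Fin m → E) (I : Set (Fin m))

theorem projPerp_eq_starProjection :
    projPerp v I = (Submodule.span ℝ (v '' I))ᗮ.starProjection :=
  rfl

theorem norm_projPerp_le (x : E) : ‖projPerp v I x‖ ≤ ‖x‖ := by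
  rw [projPerp_eq_starProjection]
  exact Submodule.norm_starProjection_apply_le _ x

theorem projPerp_eq_self_iff {x : E} :
    projPerp v I x = x ↔ x ∈ (Submodule.span ℝ (v '' I))ᗮ := by
  rw [projPerp_eq_starProjection]
  exact Submodule.starProjection_eq_self_iff

theorem projPerp_eq_self_of_norm_eq {x : E} (hx : ‖projPerp v I x‖ = ‖x‖) :
    projPerp v I x = x := by
  rw [projPerp_eq_self_iff, Submodule.mem_iff_norm_starProjection]
  exact hx

end projPerp

/-- **Lemma 1.** If the index sets `I_1, …, I_l ⊆ {1,…,m}` are such that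
`span {v_h : h ∈ I_1 ∪ ⋯ ∪ I_l} = Row(A)`, then the composition
`P_{I_l} ∘ ⋯ ∘ P_{I_1}`, restricted to `Row(A)`, has operator norm strictly less
than `1`: for every `x ∈ Row(A)` with `‖x‖ = 1`, `‖P_{I_l}(⋯(P_{I_1} x)⋯)‖ < 1`. -/
theorem norm_comp_projPerp_lt_one
    {E : Type*} [NormedAddCommGroup E] [InnerProductSpace ℝ E] [FiniteDimensional ℝ E]
    {m l : ℕ} (v : Fin m → E) (Is : Fin l → Set (Fin m))
    (hspan : Submodule.span ℝ (v '' (⋃ t, Is t)) = Submodule.span ℝ (Set.range v)) :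
    ∀ x ∈ Submodule.span ℝ (Set.range v), ‖x‖ = 1 →
      ‖(List.ofFn fun t => projPerp v (Is t)).foldl (fun y f => f y) x‖ < 1 := by
  intro x hx hnx
  have hle : ∀ f ∈ List.ofFn fun t => projPerp v (Is t), ∀ y, ‖f y‖ ≤ ‖y‖ :=
    List.forall_mem_ofFn_iff.mpr fun t => norm_projPerp_le v (Is t)
  have hfix : ∀ f ∈ List.ofFn fun t => projPerp v (Is t), ∀ y, ‖f y‖ = ‖y‖ → f y = y :=
    List.forall_mem_ofFn_iff.mpr fun t _ => projPerp_eq_self_of_norm_eq v (Is t)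
  refine hnx ▸ lt_of_le_of_ne (List.norm_foldl_apply_le hle x) fun heq => ?_
  have hperp : ∀ t, x ∈ (Submodule.span ℝ (v '' Is t))ᗮ := fun t =>
    (projPerp_eq_self_iff v (Is t)).mp <|
      List.forall_mem_ofFn_iff.mp (List.apply_eq_self_of_norm_foldl_apply_eq hle hfix heq) t
  have hrow : x ∈ (Submodule.span ℝ (Set.range v))ᗮ := by
    rw [← hspan, Set.image_iUnion, Submodule.span_iUnion, ← Submodule.iInf_orthogonal]
    exact Submodule.mem_iInf _ |>.mpr hperp
  have hx0 : x = 0 :=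
    Submodule.disjoint_def.mp (Submodule.orthogonal_disjoint _) x hx hrow
  simp [hx0] at hnx
end

section
/- Let S be an N×N row-stochastic matrix and suppose there exist an index j₀ and ε > 0 such that S_{i j₀} ≥ ε for all i (the graph of S has a strong root reaching every node with weight at least ε). Then for every vector x ∈ ℝ^N, the spread of Sx is contracted: max_i (Sx)_i - min_i (Sx)_i ≤ (1 - ε)·(max_i x_i - min_i x_i). -/
/-- Let `S` be an `N×N` row-stochastic matrix and suppose there are an
index `j₀` and `ε > 0` with `S i j₀ ≥ ε` for all `i` (the graph of `S` has a strong root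
reaching every node with weight at least `ε`).  Then for every `x ∈ ℝ^N` the spread of
`S x` is contracted: `max (Sx) - min (Sx) ≤ (1 - ε) * (max x - min x)`. -/
theorem spread_mulVec_le_of_strong_root
    {N : ℕ} (hne : (Finset.univ : Finset (Fin N)).Nonempty)
    (S : Matrix (Fin N) (Fin N) ℝ)
    (hnonneg : ∀ i j, 0 ≤ S i j)
    (hrow : ∀ i, ∑ j, S i j = 1)
    (j₀ : Fin N) (ε : ℝ) (hε : 0 < ε)
    (hroot : ∀ i, ε ≤ S i j₀)
    (x : Fin N → ℝ) :
    Finset.univ.sup' hne (S.mulVec x) - Finset.univ.inf' hne (S.mulVec x)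
      ≤ (1 - ε) * (Finset.univ.sup' hne x - Finset.univ.inf' hne x) := by
  set M := Finset.univ.sup' hne x with hM
  set m := Finset.univ.inf' hne x with hm
  have hxM : ∀ j, x j ≤ M := fun j => Finset.le_sup' x (Finset.mem_univ j)
  have hxm : ∀ j, m ≤ x j := fun j => Finset.inf'_le x (Finset.mem_univ j)
  -- coefficients c i j := S i j - ε·δ_{j j₀}
  have hc : ∀ i j, (0:ℝ) ≤ S i j - (if j = j₀ then ε else 0) := by
    intro i j
    by_cases h : j = j₀
    · subst h; simp [sub_nonneg, hroot i]
    · simp [h, hnonneg i j]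
  have hcsum : ∀ i, ∑ j, (S i j - (if j = j₀ then ε else 0)) = 1 - ε := by
    intro i
    rw [Finset.sum_sub_distrib, hrow i, Finset.sum_ite_eq' Finset.univ j₀ (fun _ => ε)]
    simp
  have hdecomp : ∀ i, S.mulVec x i
      = ε * x j₀ + ∑ j, (S i j - (if j = j₀ then ε else 0)) * x j := by
    intro i
    simp only [Matrix.mulVec, dotProduct, sub_mul, Finset.sum_sub_distrib]
    have : ∑ j, (if j = j₀ then ε else 0) * x j = ε * x j₀ := by
      simp [ite_mul]
    rw [this]; ring
  have hupper : ∀ i, S.mulVec x i ≤ ε * x j₀ + (1 - ε) * M := by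
    intro i
    rw [hdecomp i]
    gcongr
    calc ∑ j, (S i j - (if j = j₀ then ε else 0)) * x j
        ≤ ∑ j, (S i j - (if j = j₀ then ε else 0)) * M := by
          apply Finset.sum_le_sum
          intro j _
          exact mul_le_mul_of_nonneg_left (hxM j) (hc i j)
      _ = (1 - ε) * M := by rw [← Finset.sum_mul, hcsum i]
  have hlower : ∀ i, ε * x j₀ + (1 - ε) * m ≤ S.mulVec x i := by
    intro i
    rw [hdecomp i]
    gcongr
    calc (1 - ε) * m = ∑ j, (S i j - (if j = j₀ then ε else 0)) * m := by
          rw [← Finset.sum_mul, hcsum i]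
      _ ≤ ∑ j, (S i j - (if j = j₀ then ε else 0)) * x j := by
          apply Finset.sum_le_sum
          intro j _
          exact mul_le_mul_of_nonneg_left (hxm j) (hc i j)
  have h1 : Finset.univ.sup' hne (S.mulVec x) ≤ ε * x j₀ + (1 - ε) * M :=
    Finset.sup'_le _ _ fun i _ => hupper i
  have h2 : ε * x j₀ + (1 - ε) * m ≤ Finset.univ.inf' hne (S.mulVec x) :=
    Finset.le_inf' _ _ fun i _ => hlower i
  have := sub_le_sub h1 h2
  linarith
end

section
/- Let S(1), S(2), S(3), … be N×N row-stochastic matrices, and suppose there exists ε > 0 such that for every t there is a column j(t) with S(t)_{i, j(t)} ≥ ε for all i (each S(t) has a strongly rooted graph with weights at least ε). Then there exists a nonnegative vector c ∈ ℝ^N with Σ_j c_j = 1, determined by the matrix sequence, such that for every t ≥ 1 the product P_t = S(t)·S(t-1)⋯S(1) satisfies |(P_t)_{ij} - c_j| ≤ (1 - ε)^t for all i, j. In particular P_t converges exponentially fast to the rank-one matrix 𝟙 cᵀ. -/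
/-- The left-to-right running product `P_t = S(t) · S(t-1) ⋯ S(1)` of a sequence of
square matrices, with `P_0 = I`. -/
noncomputable def prodSeq {N : ℕ} (S : ℕ → Matrix (Fin N) (Fin N) ℝ) :
    ℕ → Matrix (Fin N) (Fin N) ℝ
  | 0 => 1
  | t + 1 => S (t + 1) * prodSeq S t

/-- **Proposition 3.** Let `S(1), S(2), …` be `N×N` row-stochastic
matrices, and suppose there is `ε > 0` such that each `S(t)` has a column `j(t)` with
`S(t)_{i, j(t)} ≥ ε` for all `i` (a strongly rooted graph with weights at least `ε`).
Then there is a nonnegative vector `c ∈ ℝ^N` with `Σ_j c_j = 1`, determined by the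
matrix sequence, such that for every `t ≥ 1` the product `P_t = S(t)⋯S(1)` satisfies
`|(P_t)_{ij} - c_j| ≤ (1 - ε)^t` for all `i, j`; in particular `P_t` converges
exponentially fast to the rank-one matrix `𝟙 cᵀ`. -/
theorem prodSeq_tendsto_rank_one_of_strongly_rooted
    {N : ℕ} (S : ℕ → Matrix (Fin N) (Fin N) ℝ)
    (ε : ℝ) (hε : 0 < ε)
    (hnonneg : ∀ t, 1 ≤ t → ∀ i j, 0 ≤ S t i j)
    (hrow : ∀ t, 1 ≤ t → ∀ i, ∑ j, S t i j = 1)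
    (hroot : ∀ t, 1 ≤ t → ∃ j, ∀ i, ε ≤ S t i j) :
    ∃ c : Fin N → ℝ, (∀ j, 0 ≤ c j) ∧ (∑ j, c j = 1) ∧
      ∀ t, 1 ≤ t → ∀ i j, |prodSeq S t i j - c j| ≤ (1 - ε) ^ t := by
  obtain ⟨j0, hj0⟩ := hroot 1 le_rfl
  haveI hne : Nonempty (Fin N) := ⟨j0⟩
  have hε1 : ε ≤ 1 := by
    have h1 := hj0 j0
    have h2 : S 1 j0 j0 ≤ ∑ j, S 1 j0 j :=
      Finset.single_le_sum (fun j _ => hnonneg 1 le_rfl j0 j) (Finset.mem_univ j0)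
    linarith [hrow 1 le_rfl j0]
  have h1ε : (0:ℝ) ≤ 1 - ε := by linarith
  have hunne : (Finset.univ : Finset (Fin N)).Nonempty := Finset.univ_nonempty
  set m : ℕ → Fin N → ℝ := fun t j => Finset.univ.inf' hunne (fun i => prodSeq S t i j) with hm
  set M : ℕ → Fin N → ℝ := fun t j => Finset.univ.sup' hunne (fun i => prodSeq S t i j) with hM
  have hmle : ∀ t i j, m t j ≤ prodSeq S t i j :=
    fun t i j => Finset.inf'_le (fun i => prodSeq S t i j) (Finset.mem_univ i)
  have hleM : ∀ t i j, prodSeq S t i j ≤ M t j :=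
    fun t i j => Finset.le_sup' (fun i => prodSeq S t i j) (Finset.mem_univ i)
  have hmM : ∀ t j, m t j ≤ M t j := fun t j =>
    le_trans (hmle t (Classical.arbitrary _) j) (hleM t (Classical.arbitrary _) j)
  -- nonnegativity of entries of products
  have hPnn : ∀ t i j, 0 ≤ prodSeq S t i j := by
    intro t
    induction t with
    | zero =>
      intro i j
      simp only [prodSeq, Matrix.one_apply]
      split <;> norm_num
    | succ t ih =>
      intro i j
      simp only [prodSeq, Matrix.mul_apply]
      exact Finset.sum_nonneg fun l _ =>
        mul_nonneg (hnonneg (t+1) (by omega) i l) (ih l j)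
  -- row sums of products
  have hProw : ∀ t i, ∑ j, prodSeq S t i j = 1 := by
    intro t
    induction t with
    | zero =>
      intro i
      simp [prodSeq, Matrix.one_apply]
    | succ t ih =>
      intro i
      simp only [prodSeq, Matrix.mul_apply]
      rw [Finset.sum_comm]
      have : ∀ l, ∑ j, S (t+1) i l * prodSeq S t l j = S (t+1) i l := by
        intro l
        rw [← Finset.mul_sum, ih l, mul_one]
      simp only [this]
      exact hrow (t+1) (by omega) i
  -- the key contraction step
  have key : ∀ t j, (M (t+1) j ≤ M t j) ∧ (m t j ≤ m (t+1) j) ∧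
      M (t+1) j - m (t+1) j ≤ (1-ε) * (M t j - m t j) := by
    intro t j
    obtain ⟨k, hk⟩ := hroot (t+1) (by omega)
    have hexp : ∀ i, prodSeq S (t+1) i j = ∑ l, S (t+1) i l * prodSeq S t l j := by
      intro i; simp [prodSeq, Matrix.mul_apply]
    have hsumk : ∀ i, ∑ l ∈ Finset.univ.erase k, S (t+1) i l = 1 - S (t+1) i k := by
      intro i
      have h := hrow (t+1) (by omega) i
      rw [← Finset.add_sum_erase _ _ (Finset.mem_univ k)] at h
      linarith
    have hub : ∀ i, prodSeq S (t+1) i j ≤ M t j - S (t+1) i k * (M t j - prodSeq S t k j) := by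
      intro i
      rw [hexp i, ← Finset.add_sum_erase _ _ (Finset.mem_univ k)]
      have hrest : ∑ l ∈ Finset.univ.erase k, S (t+1) i l * prodSeq S t l j
          ≤ (1 - S (t+1) i k) * M t j := by
        calc ∑ l ∈ Finset.univ.erase k, S (t+1) i l * prodSeq S t l j
            ≤ ∑ l ∈ Finset.univ.erase k, S (t+1) i l * M t j :=
              Finset.sum_le_sum fun l _ =>
                mul_le_mul_of_nonneg_left (hleM t l j) (hnonneg (t+1) (by omega) i l)
          _ = (1 - S (t+1) i k) * M t j := by rw [← Finset.sum_mul, hsumk i]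
      nlinarith [hrest]
    have hlb : ∀ i, m t j + S (t+1) i k * (prodSeq S t k j - m t j) ≤ prodSeq S (t+1) i j := by
      intro i
      rw [hexp i, ← Finset.add_sum_erase _ _ (Finset.mem_univ k)]
      have hrest : (1 - S (t+1) i k) * m t j
          ≤ ∑ l ∈ Finset.univ.erase k, S (t+1) i l * prodSeq S t l j := by
        calc (1 - S (t+1) i k) * m t j
            = ∑ l ∈ Finset.univ.erase k, S (t+1) i l * m t j := by rw [← Finset.sum_mul, hsumk i]
          _ ≤ ∑ l ∈ Finset.univ.erase k, S (t+1) i l * prodSeq S t l j :=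
              Finset.sum_le_sum fun l _ =>
                mul_le_mul_of_nonneg_left (hmle t l j) (hnonneg (t+1) (by omega) i l)
      nlinarith [hrest]
    have hgapk : prodSeq S t k j ≤ M t j := hleM t k j
    have hgapk' : m t j ≤ prodSeq S t k j := hmle t k j
    have hub' : M (t+1) j ≤ M t j - ε * (M t j - prodSeq S t k j) := by
      apply Finset.sup'_le
      intro i _
      have := hub i
      nlinarith [hk i]
    have hlb' : m t j + ε * (prodSeq S t k j - m t j) ≤ m (t+1) j := by
      apply Finset.le_inf'
      intro i _
      have := hlb i
      nlinarith [hk i]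
    refine ⟨by nlinarith, by nlinarith, by nlinarith⟩
  have hManti : ∀ j, Antitone (fun t => M t j) :=
    fun j => antitone_nat_of_succ_le (fun t => (key t j).1)
  have hmmono : ∀ j, Monotone (fun t => m t j) :=
    fun j => monotone_nat_of_le_succ (fun t => (key t j).2.1)
  have hgap : ∀ t j, M t j - m t j ≤ (1-ε)^t := by
    intro t j
    induction t with
    | zero =>
      have hM1 : M 0 j ≤ 1 := by
        apply Finset.sup'_le
        intro i _
        simp only [prodSeq, Matrix.one_apply]
        split <;> norm_num
      have hm0 : 0 ≤ m 0 j := Finset.le_inf' _ _ fun i _ => hPnn 0 i j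
      simpa using by linarith
    | succ t ih =>
      calc M (t+1) j - m (t+1) j ≤ (1-ε) * (M t j - m t j) := (key t j).2.2
        _ ≤ (1-ε) * (1-ε)^t := mul_le_mul_of_nonneg_left ih h1ε
        _ = (1-ε)^(t+1) := by ring
  have hbdd : ∀ j, BddAbove (Set.range fun t => m t j) := by
    intro j
    refine ⟨M 0 j, ?_⟩
    rintro x ⟨t, rfl⟩
    exact le_trans (hmM t j) (hManti j (Nat.zero_le t))
  refine ⟨fun j => ⨆ t, m t j, ?_, ?_, ?_⟩
  case _ =>
    -- nonnegativity is handled below; reorder via goals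
    intro j
    have h0 : 0 ≤ m 0 j := Finset.le_inf' _ _ fun i _ => hPnn 0 i j
    exact le_trans h0 (le_ciSup (hbdd j) 0)
  all_goals
    have hcl : ∀ t j, m t j ≤ ⨆ s, m s j := fun t j => le_ciSup (hbdd j) t
    have hcu : ∀ t j, (⨆ s, m s j) ≤ M t j := by
      intro t j
      apply ciSup_le
      intro s
      calc m s j ≤ m (max s t) j := hmmono j (le_max_left s t)
        _ ≤ M (max s t) j := hmM _ j
        _ ≤ M t j := hManti j (le_max_right s t)
    have hmain : ∀ t i j, |prodSeq S t i j - (⨆ s, m s j)| ≤ (1-ε)^t := by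
      intro t i j
      have h1 := hmle t i j
      have h2 := hleM t i j
      have h3 := hcl t j
      have h4 := hcu t j
      have h5 := hgap t j
      rw [abs_le]
      constructor <;> linarith
  case _ =>
    -- sum equals 1
    set c : Fin N → ℝ := fun j => ⨆ s, m s j with hc
    have i0 : Fin N := Classical.arbitrary _
    have habs : ∀ t : ℕ, |∑ j, c j - 1| ≤ (N : ℝ) * (1-ε)^t := by
      intro t
      have heq : ∑ j, c j - 1 = ∑ j, (c j - prodSeq S t i0 j) := by
        rw [Finset.sum_sub_distrib, hProw t i0]
      rw [heq]
      calc |∑ j, (c j - prodSeq S t i0 j)| ≤ ∑ j, |c j - prodSeq S t i0 j| :=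
            Finset.abs_sum_le_sum_abs _ _
        _ ≤ ∑ _j : Fin N, (1-ε)^t := Finset.sum_le_sum fun j _ => by
            rw [abs_sub_comm]; exact hmain t i0 j
        _ = (N : ℝ) * (1-ε)^t := by
            rw [Finset.sum_const, Finset.card_univ, Fintype.card_fin, nsmul_eq_mul]
    have htend : Filter.Tendsto (fun t : ℕ => (N : ℝ) * (1-ε)^t) Filter.atTop (nhds 0) := by
      have := tendsto_pow_atTop_nhds_zero_of_lt_one h1ε (by linarith)
      simpa using this.const_mul (N : ℝ)
    have hle0 : |∑ j, c j - 1| ≤ 0 :=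
      ge_of_tendsto htend (Filter.Eventually.of_forall habs)
    have := abs_nonneg (∑ j, c j - 1)
    have : |∑ j, c j - 1| = 0 := le_antisymm hle0 this
    have := abs_eq_zero.mp this
    linarith
  case _ =>
    intro t _ i j
    exact hmain t i j
end

section
/- Let A be a real m×n matrix, b ∈ ℝ^m, and λ > 0. Let x* be the minimum-norm least-squares solution of Ax = b, characterized by Aᵀ(Ax* - b) = 0 and x* ∈ (ker A)^⊥ (the row space of A). Suppose σ > 0 is such that ‖Ax‖ ≥ σ‖x‖ for every x in the row space of A (σ is a lower bound on the smallest nonzero singular value of A). Then the matrix AᵀA + λ²Iₙ is invertible, and the regularized solution x̃* = (AᵀA + λ²Iₙ)⁻¹Aᵀb (the x-component of the minimum-norm solution of the consistent augmented system (A λI_m)(x; y) = b) satisfies the relative error bound ‖x* - x̃*‖ ≤ ‖x*‖ / ((σ/λ)² + 1), i.e. ‖x* - x̃*‖ ≤ (λ²/(σ² + λ²))·‖x*‖. -/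
/-!
Put `w = x* - x̃*`. The normal equations give `(AᵀA + λ²I) w = λ² x*`, so pairing with a kernel
vector `y` shows `λ² ⟪w, y⟫ = λ² ⟪x*, y⟫ = 0`: the error `w` lies in the row space as well.
Pairing with `w` itself gives `‖Aw‖² + λ²‖w‖² = λ² ⟪w, x*⟫`, and the singular value bound together
with Cauchy–Schwarz turn this into `(σ² + λ²) ‖w‖² ≤ λ² ‖w‖ ‖x*‖`.
-/

open Matrix

/-- A vector in `Fin k → ℝ` regarded as an element of Euclidean space, so that `‖·‖`
is the Euclidean (2-) norm. -/
def ev {k : ℕ} (x : Fin k → ℝ) : EuclideanSpace ℝ (Fin k) := WithLp.toLp 2 x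

section Tikhonov

variable {ι κ : Type*} [Fintype ι] [Fintype κ] [DecidableEq ι]

theorem dotProduct_transpose_mul_add_smul_one_mulVec {R : Type*} [CommRing R]
    (A : Matrix κ ι R) (c : R) (x y : ι → R) :
    y ⬝ᵥ (Aᵀ * A + c • 1) *ᵥ x = A *ᵥ y ⬝ᵥ A *ᵥ x + c * (y ⬝ᵥ x) := by
  rw [add_mulVec, smul_mulVec, one_mulVec, dotProduct_add, ← mulVec_mulVec, dotProduct_mulVec,
    vecMul_transpose, dotProduct_smul, smul_eq_mul]

theorem transpose_mul_add_smul_one_mulVec_sub_inv {R : Type*} [CommRing R]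
    (A : Matrix κ ι R) (c : R) {x : ι → R} {b : κ → R}
    (hnormal : Aᵀ *ᵥ (A *ᵥ x - b) = 0) (hM : IsUnit (Aᵀ * A + c • 1)) :
    (Aᵀ * A + c • 1) *ᵥ (x - (Aᵀ * A + c • 1)⁻¹ *ᵥ (Aᵀ *ᵥ b)) = c • x := by
  rw [mulVec_sub, sub_eq_zero, mulVec_mulVec] at hnormal
  rw [mulVec_sub, mulVec_mulVec, mul_nonsing_inv _ ((isUnit_iff_isUnit_det _).mp hM), one_mulVec,
    ← hnormal, add_mulVec, smul_mulVec, one_mulVec, add_sub_cancel_left]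

theorem dotProduct_eq_zero_of_transpose_mul_add_smul_one_mulVec_eq_smul {R : Type*} [CommRing R]
    [NoZeroDivisors R] (A : Matrix κ ι R) {c : R} (hc : c ≠ 0) {w x : ι → R}
    (hw : (Aᵀ * A + c • 1) *ᵥ w = c • x) (hx : ∀ y, A *ᵥ y = 0 → x ⬝ᵥ y = 0)
    {y : ι → R} (hy : A *ᵥ y = 0) : w ⬝ᵥ y = 0 := by
  have h := dotProduct_transpose_mul_add_smul_one_mulVec A c w y
  rw [hw, hy, zero_dotProduct, zero_add, dotProduct_smul, smul_eq_mul, dotProduct_comm,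
    hx y hy, mul_zero, eq_comm, mul_eq_zero] at h
  exact dotProduct_comm y w ▸ h.resolve_left hc

theorem isUnit_transpose_mul_add_smul_one (A : Matrix κ ι ℝ) {c : ℝ} (hc : 0 < c) :
    IsUnit (Aᵀ * A + c • 1) := by
  have h := PosDef.posSemidef_add (posSemidef_conjTranspose_mul_self A) (PosDef.one.smul hc)
  rw [conjTranspose_eq_transpose_of_trivial] at h
  exact h.isUnit

end Tikhonov

theorem norm_ev_sq {k : ℕ} (x : Fin k → ℝ) : ‖ev x‖ ^ 2 = x ⬝ᵥ x := by
  rw [← real_inner_self_eq_norm_sq, ev, EuclideanSpace.inner_toLp_toLp, star_trivial]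

theorem inner_ev {k : ℕ} (x y : Fin k → ℝ) : inner ℝ (ev x) (ev y) = x ⬝ᵥ y := by
  rw [ev, ev, EuclideanSpace.inner_toLp_toLp, star_trivial, dotProduct_comm]

/-- **Theorem 3, error bound.** Let `A` be a real `m×n` matrix,
`b ∈ ℝ^m`, `λ > 0`.  Let `x*` be the minimum-norm least-squares solution of `Ax = b`,
characterized by `Aᵀ(Ax* - b) = 0` and `x* ∈ (ker A)ᗮ` (the row space of `A`).  Suppose
`σ > 0` satisfies `‖Ax‖ ≥ σ‖x‖` for every `x` in the row space of `A`.  Then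
`AᵀA + λ²Iₙ` is invertible, and the regularized solution
`x̃* = (AᵀA + λ²Iₙ)⁻¹Aᵀb` satisfies
`‖x* - x̃*‖ ≤ ‖x*‖ / ((σ/λ)² + 1) = (λ²/(σ² + λ²))·‖x*‖`. -/
theorem tikhonov_relative_error_bound
    {m n : ℕ} (A : Matrix (Fin m) (Fin n) ℝ) (b : Fin m → ℝ)
    (lam : ℝ) (hlam : 0 < lam)
    (xstar : Fin n → ℝ)
    (hnormal : Aᵀ.mulVec (A.mulVec xstar - b) = 0)
    (hrowspace : ∀ y : Fin n → ℝ, A.mulVec y = 0 → xstar ⬝ᵥ y = 0)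
    (σ : ℝ) (hσ : 0 < σ)
    (hsing : ∀ x : Fin n → ℝ, (∀ y : Fin n → ℝ, A.mulVec y = 0 → x ⬝ᵥ y = 0) →
      σ * ‖ev x‖ ≤ ‖ev (A.mulVec x)‖) :
    IsUnit (Aᵀ * A + lam ^ 2 • (1 : Matrix (Fin n) (Fin n) ℝ)) ∧
      ‖ev (xstar - (Aᵀ * A + lam ^ 2 • (1 : Matrix (Fin n) (Fin n) ℝ))⁻¹.mulVec
          (Aᵀ.mulVec b))‖
        ≤ (lam ^ 2 / (σ ^ 2 + lam ^ 2)) * ‖ev xstar‖ := by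
  set M := Aᵀ * A + lam ^ 2 • (1 : Matrix (Fin n) (Fin n) ℝ)
  have hlam2 : 0 < lam ^ 2 := pow_pos hlam 2
  have hM : IsUnit M := isUnit_transpose_mul_add_smul_one A hlam2
  refine ⟨hM, ?_⟩
  set w := xstar - M⁻¹ *ᵥ (Aᵀ *ᵥ b)
  have hMw : M *ᵥ w = lam ^ 2 • xstar :=
    transpose_mul_add_smul_one_mulVec_sub_inv A _ hnormal hM
  have hw_row : ∀ y, A *ᵥ y = 0 → w ⬝ᵥ y = 0 := fun y =>
    dotProduct_eq_zero_of_transpose_mul_add_smul_one_mulVec_eq_smul A hlam2.ne' hMw hrowspace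
  have henergy :
      ‖ev (A *ᵥ w)‖ ^ 2 + lam ^ 2 * ‖ev w‖ ^ 2 = lam ^ 2 * inner ℝ (ev w) (ev xstar) := by
    have h := dotProduct_transpose_mul_add_smul_one_mulVec A (lam ^ 2) w w
    rw [hMw, dotProduct_smul, smul_eq_mul] at h
    rw [norm_ev_sq, norm_ev_sq, inner_ev, ← h]
  have hAw : σ ^ 2 * ‖ev w‖ ^ 2 ≤ ‖ev (A *ᵥ w)‖ ^ 2 := by
    rw [← mul_pow]
    exact pow_le_pow_left₀ (by positivity) (hsing w hw_row) 2
  have hkey : (σ ^ 2 + lam ^ 2) * ‖ev w‖ * ‖ev w‖ ≤ lam ^ 2 * ‖ev xstar‖ * ‖ev w‖ := by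
    nlinarith [real_inner_le_norm (ev w) (ev xstar)]
  rw [div_mul_eq_mul_div, le_div_iff₀ (by positivity)]
  rcases (norm_nonneg (ev w)).eq_or_lt with hw0 | hw0
  · rw [← hw0, zero_mul]
    positivity
  · linarith [le_of_mul_le_mul_right hkey hw0]
end

section
/- Let (Ω, ℱ, ℙ) be a probability space, X, Y : Ω → ℝ nonnegative integrable random variables, B an event independent of X, and constants 0 ≤ γ < 1 and 0 ≤ p ≤ ℙ(B). If Y ≤ X almost surely and Y ≤ γ·X almost surely on B, then 𝔼[Y] ≤ (1 - (1 - γ)p)·𝔼[X]. (Iterating this one-step bound yields the geometric decay 𝔼[‖e(τ_{nϑ})‖²] ≤ (1 - (1 - γ²)p^N)ⁿ·𝔼[‖e(τ₀)‖²] used to prove exponential convergence in expectation.) -/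
open MeasureTheory

/-- Let `(Ω, ℱ, ℙ)` be a probability space, `X, Y` nonnegative
integrable random variables, `B` an event independent of `X` (so that
`𝔼[X·1_B] = ℙ(B)·𝔼[X]`), and constants `0 ≤ γ < 1`, `0 ≤ p ≤ ℙ(B)`.  If `Y ≤ X`
almost surely and `Y ≤ γ·X` almost surely on `B`, then
`𝔼[Y] ≤ (1 - (1 - γ)·p)·𝔼[X]`. -/
theorem expectation_contraction_step
    {Ω : Type*} [MeasurableSpace Ω] (ℙ : Measure Ω) [IsProbabilityMeasure ℙ]
    (X Y : Ω → ℝ) (hX : Integrable X ℙ) (hY : Integrable Y ℙ)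
    (hXnn : ∀ᵐ ω ∂ℙ, 0 ≤ X ω) (hYnn : ∀ᵐ ω ∂ℙ, 0 ≤ Y ω)
    (B : Set Ω) (hB : MeasurableSet B)
    (hIndep : ∫ ω in B, X ω ∂ℙ = (ℙ B).toReal * ∫ ω, X ω ∂ℙ)
    (γ p : ℝ) (hγ0 : 0 ≤ γ) (hγ1 : γ < 1)
    (hp0 : 0 ≤ p) (hp : p ≤ (ℙ B).toReal)
    (hYleX : ∀ᵐ ω ∂ℙ, Y ω ≤ X ω)
    (hcontract : ∀ᵐ ω ∂ℙ, ω ∈ B → Y ω ≤ γ * X ω) :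
    ∫ ω, Y ω ∂ℙ ≤ (1 - (1 - γ) * p) * ∫ ω, X ω ∂ℙ := by
  have hXint : 0 ≤ ∫ ω, X ω ∂ℙ := integral_nonneg_of_ae hXnn
  set b := (ℙ B).toReal with hb
  have hsplitY : ∫ ω, Y ω ∂ℙ = (∫ ω in B, Y ω ∂ℙ) + ∫ ω in Bᶜ, Y ω ∂ℙ :=
    (integral_add_compl hB hY).symm
  have hsplitX : ∫ ω, X ω ∂ℙ = (∫ ω in B, X ω ∂ℙ) + ∫ ω in Bᶜ, X ω ∂ℙ :=
    (integral_add_compl hB hX).symm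
  have h1 : ∫ ω in B, Y ω ∂ℙ ≤ γ * b * ∫ ω, X ω ∂ℙ := by
    have : ∫ ω in B, Y ω ∂ℙ ≤ ∫ ω in B, γ * X ω ∂ℙ := by
      refine setIntegral_mono_ae_restrict hY.restrict
        ((hX.restrict).const_mul γ) ?_
      filter_upwards [(ae_restrict_iff' hB).mpr hcontract] with ω h
      exact h
    calc ∫ ω in B, Y ω ∂ℙ ≤ ∫ ω in B, γ * X ω ∂ℙ := this
      _ = γ * ∫ ω in B, X ω ∂ℙ := by rw [integral_const_mul]
      _ = γ * b * ∫ ω, X ω ∂ℙ := by rw [hIndep]; ring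
  have h2 : ∫ ω in Bᶜ, Y ω ∂ℙ ≤ ∫ ω in Bᶜ, X ω ∂ℙ :=
    setIntegral_mono_ae_restrict hY.restrict hX.restrict
      (ae_restrict_of_ae hYleX)
  have h3 : ∫ ω in Bᶜ, X ω ∂ℙ = (1 - b) * ∫ ω, X ω ∂ℙ := by
    have := hsplitX
    rw [hIndep] at this
    linarith
  have hbp : (1 - γ) * p ≤ (1 - γ) * b := by
    apply mul_le_mul_of_nonneg_left hp (by linarith)
  calc ∫ ω, Y ω ∂ℙ = (∫ ω in B, Y ω ∂ℙ) + ∫ ω in Bᶜ, Y ω ∂ℙ := hsplitY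
    _ ≤ γ * b * ∫ ω, X ω ∂ℙ + (1 - b) * ∫ ω, X ω ∂ℙ := by
        rw [← h3]; exact add_le_add h1 h2
    _ = (1 - (1 - γ) * b) * ∫ ω, X ω ∂ℙ := by ring
    _ ≤ (1 - (1 - γ) * p) * ∫ ω, X ω ∂ℙ := by nlinarith
end
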